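/- arXiv:2511.20213 — 2 statements merged into one kernel-verified Lean document; each statement's English description precedes it below -/
import Mathlib

section
/- Let G be a graph of order n, let H be any graph, and let u be a vertex of G with degree n − 1. Then G is K₁ ∨ H-saturated if and only if the induced subgraph G[V(G) \ {u}] is H-saturated. -/
open SimpleGraph

/-- The join `G₁ ∨ G₂` of two simple graphs: disjoint union plus all edges in between. -/
def SimpleGraph.graphJoin {α β : Type*} (G : SimpleGraph α) (H : SimpleGraph β) :
    SimpleGraph (α ⊕ β) where
  Adj x y :=
    match x, y with
    | Sum.inl a, Sum.inl b => G.Adj a b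
    | Sum.inr a, Sum.inr b => H.Adj a b
    | Sum.inl _, Sum.inr _ => True
    | Sum.inr _, Sum.inl _ => True
  symm := ⟨by
    rintro (a | a) (b | b) h
    · exact G.adj_symm h
    · trivial
    · trivial
    · exact H.adj_symm h⟩
  loopless := ⟨by
    rintro (a | a) h
    · exact G.irrefl h
    · exact H.irrefl h⟩

/-- `H.Contains G` : `G` contains a copy of `H`, i.e. a subgraph isomorphic to `H`,
equivalently there is an injective graph homomorphism `H →g G`. -/
def SimpleGraph.Contains {α β : Type*} (H : SimpleGraph α) (G : SimpleGraph β) : Prop :=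
  ∃ f : H →g G, Function.Injective f

/-- `H.IsSatur G` : the graph `G` is `H`-saturated: it contains no copy of `H`, but adding
any edge between distinct nonadjacent vertices creates a copy of `H`. -/
def SimpleGraph.IsSatur {α β : Type*} (H : SimpleGraph α) (G : SimpleGraph β) : Prop :=
  ¬ H.Contains G ∧ ∀ u v : β, u ≠ v → ¬ G.Adj u v →
    H.Contains (G ⊔ SimpleGraph.fromEdgeSet {s(u, v)})

/-- `satNumber n H` : the saturation number of `H`, the minimum number of edges in an
`H`-saturated graph of order `n`. -/
noncomputable def satNumber {α : Type*} (n : ℕ) (H : SimpleGraph α) : ℕ :=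
  sInf {m : ℕ | ∃ G : SimpleGraph (Fin n), H.IsSatur G ∧ G.edgeSet.ncard = m}

open SimpleGraph

lemma full_adj {V : Type*} [Fintype V] (G : SimpleGraph V) [DecidableRel G.Adj] (u : V)
    (hu : G.degree u = Fintype.card V - 1) : ∀ v, v ≠ u → G.Adj u v := by
  classical
  intro v hv
  have hsub : G.neighborFinset u ⊆ Finset.univ.erase u := by
    intro x hx
    simp only [Finset.mem_erase, Finset.mem_univ, and_true]
    intro h
    rw [SimpleGraph.mem_neighborFinset] at hx
    subst h
    exact G.irrefl hx
  have hcard : (Finset.univ.erase u).card ≤ (G.neighborFinset u).card := by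
    rw [Finset.card_erase_of_mem (Finset.mem_univ u)]
    have : (G.neighborFinset u).card = G.degree u := rfl
    rw [this, hu]
    simp [Finset.card_univ]
  have heq := Finset.eq_of_subset_of_card_le hsub hcard
  have : v ∈ G.neighborFinset u := by
    rw [heq]
    simp [hv]
  simpa using this

lemma contains_join_iff {V W : Type*} (G : SimpleGraph V) (H : SimpleGraph W) (u : V)
    (hfull : ∀ v, v ≠ u → G.Adj u v) :
    ((⊤ : SimpleGraph (Fin 1)).graphJoin H).Contains G ↔
      H.Contains (G.induce {v : V | v ≠ u}) := by
  classical
  constructor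
  · rintro ⟨f, hf⟩
    by_cases hcase : ∃ w₀, f (Sum.inr w₀) = u
    · obtain ⟨w₀, hw₀⟩ := hcase
      have hau : f (Sum.inl 0) ≠ u := by
        rw [← hw₀]
        intro h
        exact (by simp : (Sum.inl (0 : Fin 1) : Fin 1 ⊕ W) ≠ Sum.inr w₀) (hf h)
      have hne : ∀ w, w ≠ w₀ → f (Sum.inr w) ≠ u := by
        intro w hw h
        exact hw (Sum.inr.inj (hf (h.trans hw₀.symm)))
      refine ⟨⟨fun w => if h : w = w₀ then ⟨f (Sum.inl 0), hau⟩
          else ⟨f (Sum.inr w), hne w h⟩, ?_⟩, ?_⟩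
      · intro w w' hadj
        have hww' : w ≠ w' := hadj.ne
        by_cases h1 : w = w₀
        · subst h1
          rw [dif_pos rfl, dif_neg (Ne.symm hww')]
          have : G.Adj (f (Sum.inl 0)) (f (Sum.inr w')) :=
            f.map_rel' (show ((⊤ : SimpleGraph (Fin 1)).graphJoin H).Adj
              (Sum.inl 0) (Sum.inr w') from trivial)
          exact this
        · by_cases h2 : w' = w₀
          · subst h2
            rw [dif_neg h1, dif_pos rfl]
            have : G.Adj (f (Sum.inr w)) (f (Sum.inl 0)) :=
              (f.map_rel' (show ((⊤ : SimpleGraph (Fin 1)).graphJoin H).Adj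
                (Sum.inl 0) (Sum.inr w) from trivial)).symm
            exact this
          · rw [dif_neg h1, dif_neg h2]
            exact f.map_rel' (show ((⊤ : SimpleGraph (Fin 1)).graphJoin H).Adj
              (Sum.inr w) (Sum.inr w') from hadj)
      · intro w w' h
        have h' : (if h : w = w₀ then (⟨f (Sum.inl 0), hau⟩ : {v : V | v ≠ u})
            else ⟨f (Sum.inr w), hne w h⟩) = (if h : w' = w₀ then ⟨f (Sum.inl 0), hau⟩
            else ⟨f (Sum.inr w'), hne w' h⟩) := h
        by_cases h1 : w = w₀ <;> by_cases h2 : w' = w₀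
        · rw [h1, h2]
        · rw [dif_pos h1, dif_neg h2, Subtype.mk.injEq] at h'
          exact absurd (hf h') (by simp)
        · rw [dif_neg h1, dif_pos h2, Subtype.mk.injEq] at h'
          exact absurd (hf h') (by simp)
        · rw [dif_neg h1, dif_neg h2, Subtype.mk.injEq] at h'
          exact Sum.inr.inj (hf h')
    · push_neg at hcase
      refine ⟨⟨fun w => ⟨f (Sum.inr w), hcase w⟩, ?_⟩, ?_⟩
      · intro w w' hadj
        exact f.map_rel' (show ((⊤ : SimpleGraph (Fin 1)).graphJoin H).Adj
          (Sum.inr w) (Sum.inr w') from hadj)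
      · intro w w' h
        have h' : (⟨f (Sum.inr w), hcase w⟩ : {v : V | v ≠ u})
            = ⟨f (Sum.inr w'), hcase w'⟩ := h
        rw [Subtype.mk.injEq] at h'
        exact Sum.inr.inj (hf h')
  · rintro ⟨g, hg⟩
    refine ⟨⟨fun x => match x with | Sum.inl _ => u | Sum.inr w => (g w).val, ?_⟩, ?_⟩
    · rintro (a | a) (b | b) hab
      · exact absurd (Subsingleton.elim a b) (hab : a ≠ b)
      · exact hfull _ (g b).prop
      · exact (hfull _ (g a).prop).symm
      · exact g.map_rel' hab
    · rintro (a | a) (b | b) h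
      · exact congrArg Sum.inl (Subsingleton.elim a b)
      · exact absurd h.symm (g b).prop
      · exact absurd h (g a).prop
      · exact congrArg Sum.inr (hg (Subtype.val_injective h))

lemma induce_sup_edge {V : Type*} (G : SimpleGraph V) (u : V) (x y : {v : V | v ≠ u}) :
    ((G ⊔ SimpleGraph.fromEdgeSet {s((x : V), (y : V))}).induce {v : V | v ≠ u}) =
      (G.induce {v : V | v ≠ u}) ⊔ SimpleGraph.fromEdgeSet {s(x, y)} := by
  ext a b
  simp only [comap_adj, Function.Embedding.coe_subtype, sup_adj, fromEdgeSet_adj,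
    Set.mem_singleton_iff, Sym2.eq_iff, ne_eq, Subtype.ext_iff, ← Subtype.coe_inj]

theorem isSatur_join_K1_iff_induce {V W : Type*} [Fintype V] (G : SimpleGraph V)
    [DecidableRel G.Adj] (H : SimpleGraph W) (u : V)
    (hu : G.degree u = Fintype.card V - 1) :
    ((⊤ : SimpleGraph (Fin 1)).graphJoin H).IsSatur G ↔
      H.IsSatur (G.induce {v : V | v ≠ u}) := by
  have hfull := full_adj G u hu
  constructor
  · rintro ⟨h1, h2⟩
    constructor
    · intro hc
      exact h1 ((contains_join_iff G H u hfull).mpr hc)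
    · intro x y hxy hnadj
      have hxy' : (x : V) ≠ (y : V) := fun h => hxy (Subtype.val_injective h)
      have hnadj' : ¬ G.Adj ↑x ↑y := fun h => hnadj h
      have hc := h2 ↑x ↑y hxy' hnadj'
      rw [contains_join_iff _ H u
        (fun v hv => (sup_adj _ _ _ _).mpr (Or.inl (hfull v hv)))] at hc
      rwa [induce_sup_edge] at hc
  · rintro ⟨h1, h2⟩
    constructor
    · intro hc
      exact h1 ((contains_join_iff G H u hfull).mp hc)
    · intro v w hvw hnadj
      have hv : v ≠ u := by
        rintro rfl
        exact hnadj (hfull w (Ne.symm hvw))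
      have hw : w ≠ u := by
        rintro rfl
        exact hnadj (hfull v hvw).symm
      have hnadj' : ¬ (G.induce {v : V | v ≠ u}).Adj ⟨v, hv⟩ ⟨w, hw⟩ := fun h => hnadj h
      have hc := h2 ⟨v, hv⟩ ⟨w, hw⟩ (fun h => hvw (congrArg Subtype.val h)) hnadj'
      rw [← induce_sup_edge] at hc
      rw [contains_join_iff _ H u
        (fun v' hv' => (sup_adj _ _ _ _).mpr (Or.inl (hfull v' hv')))]
      exact hc
end

section
/- For all integers k ≥ 2 and n ≥ k + 2, sat(n, K₂ ∨ P_k) ≤ 2n − 3 + sat(n − 2, P_k). -/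
open SimpleGraph

set_option linter.unreachableTactic false
set_option linter.unusedTactic false

lemma contains_of_iso {α β γ : Type*} {H : SimpleGraph α} {G : SimpleGraph β} {G₂ : SimpleGraph γ}
    (e : G ≃g G₂) (h : H.Contains G) : H.Contains G₂ := by
  obtain ⟨f, hf⟩ := h
  exact ⟨e.toHom.comp f, e.injective.comp hf⟩

lemma sym2_eq_equiv {β γ : Type*} (e : β ≃ γ) (a b u v : β) :
    s(e a, e b) = s(e u, e v) ↔ s(a, b) = s(u, v) := by
  rw [Sym2.eq_iff, Sym2.eq_iff]
  constructor
  · rintro (⟨h1, h2⟩ | ⟨h1, h2⟩)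
    · exact Or.inl ⟨e.injective h1, e.injective h2⟩
    · exact Or.inr ⟨e.injective h1, e.injective h2⟩
  · rintro (⟨rfl, rfl⟩ | ⟨rfl, rfl⟩) <;> simp

lemma isSatur_of_iso {α β γ : Type*} {H : SimpleGraph α} {G : SimpleGraph β} {G₂ : SimpleGraph γ}
    (e : G ≃g G₂) (h : H.IsSatur G) : H.IsSatur G₂ := by
  constructor
  · exact fun hc => h.1 (contains_of_iso e.symm hc)
  · intro u v huv hadj
    have huv' : e.symm u ≠ e.symm v := fun hc => huv (e.symm.injective hc)
    have hadj' : ¬ G.Adj (e.symm u) (e.symm v) := by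
      intro hc
      exact hadj (by simpa using e.map_rel_iff.mpr hc)
    have h2 := h.2 _ _ huv' hadj'
    refine contains_of_iso ⟨e.toEquiv, ?_⟩ h2
    intro a b
    simp only [sup_adj, fromEdgeSet_adj, Set.mem_singleton_iff, RelIso.coe_fn_toEquiv]
    constructor
    · rintro (hc | ⟨hc, hne⟩)
      · exact Or.inl (e.map_rel_iff.mp hc)
      · refine Or.inr ⟨?_, fun hab => hne (by rw [hab])⟩
        have : s((e : β ≃ γ) a, (e : β ≃ γ) b) = s((e : β ≃ γ) (e.symm u), (e : β ≃ γ) (e.symm v)) := by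
          simpa using hc
        exact (sym2_eq_equiv (e : β ≃ γ) _ _ _ _).mp this
    · rintro (hc | ⟨hc, hne⟩)
      · exact Or.inl (e.map_rel_iff.mpr hc)
      · refine Or.inr ⟨?_, fun hab => hne (e.injective hab)⟩
        have := (sym2_eq_equiv (e : β ≃ γ) a b (e.symm u) (e.symm v)).mpr hc
        simpa using this

lemma exists_isSatur {α : Type*} (H : SimpleGraph α) (m : ℕ)
    (hfree : ¬ H.Contains (⊥ : SimpleGraph (Fin m))) :
    ∃ G : SimpleGraph (Fin m), H.IsSatur G := by
  obtain ⟨G, hG, hmax⟩ := Set.Finite.exists_maximalFor (id : SimpleGraph (Fin m) → SimpleGraph (Fin m))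
    {G : SimpleGraph (Fin m) | ¬ H.Contains G} (Set.toFinite _) ⟨⊥, hfree⟩
  refine ⟨G, hG, ?_⟩
  intro u v huv hadj
  by_contra hc
  have heq : id G = id (G ⊔ fromEdgeSet {s(u, v)}) := le_antisymm le_sup_left (hmax hc le_sup_left)
  apply hadj
  have : (G ⊔ fromEdgeSet {s(u, v)}).Adj u v := by
    simp [sup_adj, fromEdgeSet_adj, huv]
  simp only [id] at heq; rwa [← heq] at this

@[simp] lemma graphJoin_adj_ll {α β : Type*} (G : SimpleGraph α) (H : SimpleGraph β) (a b : α) :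
    (G.graphJoin H).Adj (Sum.inl a) (Sum.inl b) ↔ G.Adj a b := Iff.rfl
@[simp] lemma graphJoin_adj_rr {α β : Type*} (G : SimpleGraph α) (H : SimpleGraph β) (a b : β) :
    (G.graphJoin H).Adj (Sum.inr a) (Sum.inr b) ↔ H.Adj a b := Iff.rfl
@[simp] lemma graphJoin_adj_lr {α β : Type*} (G : SimpleGraph α) (H : SimpleGraph β) (a : α) (b : β) :
    (G.graphJoin H).Adj (Sum.inl a) (Sum.inr b) := trivial
@[simp] lemma graphJoin_adj_rl {α β : Type*} (G : SimpleGraph α) (H : SimpleGraph β) (a : β) (b : α) :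
    (G.graphJoin H).Adj (Sum.inr a) (Sum.inl b) := trivial


lemma graphJoin_edgeSet {n' : ℕ} (G' : SimpleGraph (Fin n')) :
    ((⊤ : SimpleGraph (Fin 2)).graphJoin G').edgeSet
      = ({s(Sum.inl 0, Sum.inl 1)} ∪ (Sym2.map Sum.inr '' G'.edgeSet))
        ∪ ((fun p : Fin 2 × Fin n' => s(Sum.inl p.1, Sum.inr p.2)) '' Set.univ) := by
  ext e
  induction e using Sym2.ind with
  | _ x y =>
    rw [mem_edgeSet]
    cases x with
    | inl a =>
      cases y with
      | inl b =>
        simp only [graphJoin_adj_ll, top_adj, Set.mem_union, Set.mem_singleton_iff,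
          Set.mem_image, Sym2.eq_iff]
        constructor
        · intro hab
          refine Or.inl (Or.inl ?_)
          fin_cases a <;> fin_cases b <;> simp_all <;> rfl
        · rintro ((h | ⟨e', _, h⟩) | ⟨p, _, h⟩)
          · rcases h with ⟨h1, h2⟩ | ⟨h1, h2⟩ <;>
              · cases Sum.inl_injective h1; cases Sum.inl_injective h2; decide
          · exfalso; induction e' using Sym2.ind with
            | _ u v => simp [Sym2.map_pair_eq, Sym2.eq_iff] at h
          · exfalso; simp [Sym2.eq_iff] at h
      | inr b =>
        simp only [graphJoin_adj_lr, Set.mem_union, Set.mem_singleton_iff, Set.mem_image,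
          Sym2.eq_iff, true_iff]
        exact Or.inr ⟨(a, b), Set.mem_univ _, by simp⟩
    | inr a =>
      cases y with
      | inl b =>
        simp only [graphJoin_adj_rl, Set.mem_union, Set.mem_singleton_iff, Set.mem_image,
          Sym2.eq_iff, true_iff]
        exact Or.inr ⟨(b, a), Set.mem_univ _, by simp [Sym2.eq_iff]⟩
      | inr b =>
        simp only [graphJoin_adj_rr, Set.mem_union, Set.mem_singleton_iff, Set.mem_image,
          Sym2.eq_iff]
        constructor
        · intro hab
          exact Or.inl (Or.inr ⟨s(a, b), hab, by simp [Sym2.map_pair_eq]⟩)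
        · rintro ((h | ⟨e', he', h⟩) | ⟨p, _, h⟩)
          · exfalso; rcases h with ⟨h, _⟩ | ⟨h, _⟩ <;> exact Sum.inl_ne_inr h.symm
          · induction e' using Sym2.ind with
            | _ u v =>
              rw [Sym2.map_pair_eq, Sym2.eq_iff] at h
              rcases h with ⟨h1, h2⟩ | ⟨h1, h2⟩
              · cases Sum.inr_injective h1; cases Sum.inr_injective h2; exact he'
              · cases Sum.inr_injective h1; cases Sum.inr_injective h2
                exact G'.adj_symm he'
          · exfalso; simp [Sym2.eq_iff] at h

lemma graphJoin_edgeSet_ncard {n' : ℕ} (G' : SimpleGraph (Fin n')) :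
    ((⊤ : SimpleGraph (Fin 2)).graphJoin G').edgeSet.ncard
      = 1 + G'.edgeSet.ncard + 2 * n' := by
  rw [graphJoin_edgeSet]
  have hinr : Function.Injective (Sum.inr : Fin n' → Fin 2 ⊕ Fin n') := Sum.inr_injective
  have hC : Function.Injective (fun p : Fin 2 × Fin n' => s(Sum.inl p.1, Sum.inr p.2)) := by
    rintro ⟨a, b⟩ ⟨c, d⟩ h
    simp only [Sym2.eq_iff] at h
    rcases h with ⟨h1, h2⟩ | ⟨h1, h2⟩
    · cases Sum.inl_injective h1; cases Sum.inr_injective h2; rfl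
    · exact absurd h1 (by simp)
  have hd1 : Disjoint ({s(Sum.inl 0, Sum.inl 1)} : Set (Sym2 (Fin 2 ⊕ Fin n')))
      (Sym2.map Sum.inr '' G'.edgeSet) := by
    rw [Set.disjoint_left]
    rintro e rfl ⟨e', _, h⟩
    induction e' using Sym2.ind with
    | _ u v => simp [Sym2.map_pair_eq, Sym2.eq_iff] at h
  have hd2 : Disjoint (({s(Sum.inl 0, Sum.inl 1)} : Set (Sym2 (Fin 2 ⊕ Fin n'))) ∪ (Sym2.map Sum.inr '' G'.edgeSet))
      ((fun p : Fin 2 × Fin n' => s(Sum.inl p.1, Sum.inr p.2)) '' Set.univ) := by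
    rw [Set.disjoint_right]
    rintro e ⟨⟨a, b⟩, _, rfl⟩ he
    rcases he with h | ⟨e', _, h⟩
    · simp [Sym2.eq_iff] at h
    · induction e' using Sym2.ind with
      | _ u v => simp [Sym2.map_pair_eq, Sym2.eq_iff] at h
  rw [Set.ncard_union_eq hd2 (Set.toFinite _) (Set.toFinite _),
    Set.ncard_union_eq hd1 (Set.toFinite _) (Set.toFinite _),
    Set.ncard_singleton, Set.ncard_image_of_injective _ (Sym2.map.injective hinr),
    Set.ncard_image_of_injective _ hC]
  have : (Set.univ : Set (Fin 2 × Fin n')).ncard = 2 * n' := by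
    rw [Set.ncard_univ, Nat.card_eq_fintype_card]
    simp
  rw [this]

lemma join_isSatur {k n' : ℕ} (hk : 2 ≤ k) (hn' : k ≤ n') (G' : SimpleGraph (Fin n'))
    (hG' : (pathGraph k).IsSatur G') :
    ((⊤ : SimpleGraph (Fin 2)).graphJoin (pathGraph k)).IsSatur
      ((⊤ : SimpleGraph (Fin 2)).graphJoin G') := by
  classical
  have hn0 : 0 < n' := by omega
  constructor
  · rintro ⟨f, hf⟩
    set Bad : Finset (Fin k) := Finset.univ.filter (fun i => (f (Sum.inr i)).isLeft) with hBad
    set Gdd : Finset (Fin 2) := Finset.univ.filter (fun c => (f (Sum.inl c)).isRight) with hGL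
    have hGL2 : Gdd.card ≤ 2 := by
      calc Gdd.card ≤ (Finset.univ : Finset (Fin 2)).card := Finset.card_le_univ _
      _ = 2 := by simp
    have hcard : Bad.card ≤ Gdd.card := by
      set TL : Finset (Fin 2 ⊕ Fin k) := Finset.univ.filter (fun v => (f v).isLeft) with hTL
      have hTL2 : TL.card ≤ 2 := by
        have hmem : ∀ v ∈ TL, Sum.elim id (fun _ => (0 : Fin 2)) (f v)
            ∈ (Finset.univ : Finset (Fin 2)) := fun _ _ => Finset.mem_univ _
        have hinj : Set.InjOn (fun v => Sum.elim id (fun _ => (0 : Fin 2)) (f v)) TL := by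
          intro u hu v hv huv
          rw [hTL, Finset.coe_filter, Set.mem_setOf_eq] at hu hv
          obtain ⟨x, hx⟩ := Sum.isLeft_iff.mp hu.2
          obtain ⟨y, hy⟩ := Sum.isLeft_iff.mp hv.2
          simp only [hx, hy, Sum.elim_inl, id] at huv
          apply hf; rw [hx, hy, huv]
        calc TL.card ≤ (Finset.univ : Finset (Fin 2)).card :=
          Finset.card_le_card_of_injOn _ hmem hinj
        _ = 2 := by simp
      have hsub : (Bad.image Sum.inr ∪ (Finset.univ \ Gdd).image Sum.inl) ⊆ TL := by
        intro v hv
        rw [Finset.mem_union] at hv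
        rcases hv with hv | hv
        · obtain ⟨i, hi, rfl⟩ := Finset.mem_image.mp hv
          rw [hTL, Finset.mem_filter]
          exact ⟨Finset.mem_univ _, (Finset.mem_filter.mp hi).2⟩
        · obtain ⟨c, hc, rfl⟩ := Finset.mem_image.mp hv
          rw [Finset.mem_sdiff] at hc
          rw [hTL, Finset.mem_filter]
          refine ⟨Finset.mem_univ _, ?_⟩
          have h2 := hc.2
          rw [hGL, Finset.mem_filter] at h2
          push_neg at h2
          have h3 := h2 (Finset.mem_univ _)
          rwa [← Sum.not_isRight]
      have hdisj : Disjoint (Bad.image Sum.inr) ((Finset.univ \ Gdd).image Sum.inl) := by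
        rw [Finset.disjoint_left]
        rintro v hv1 hv2
        obtain ⟨i, _, rfl⟩ := Finset.mem_image.mp hv1
        obtain ⟨c, _, h⟩ := Finset.mem_image.mp hv2
        exact Sum.inl_ne_inr h
      have hcards := Finset.card_le_card hsub
      rw [Finset.card_union_of_disjoint hdisj,
        Finset.card_image_of_injective _ Sum.inr_injective,
        Finset.card_image_of_injective _ Sum.inl_injective,
        Finset.card_sdiff_of_subset (Finset.subset_univ _)] at hcards
      simp only [Finset.card_univ, Fintype.card_fin] at hcards
      omega
    have hcard2 : Fintype.card ↥Bad ≤ Fintype.card ↥Gdd := by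
      simpa [Fintype.card_coe] using hcard
    obtain ⟨emb⟩ := Function.Embedding.nonempty_of_card_le hcard2
    set φ : Fin k → Fin 2 := fun i => if h : i ∈ Bad then (emb ⟨i, h⟩ : Fin 2) else 0 with hφ
    have hφGL : ∀ i (h : i ∈ Bad), φ i ∈ Gdd := by
      intro i h
      rw [hφ]; simp only [h, dif_pos]
      exact (emb ⟨i, h⟩).2
    have hφinj : ∀ i j (hi : i ∈ Bad) (hj : j ∈ Bad), φ i = φ j → i = j := by
      intro i j hi hj h
      rw [hφ] at h; simp only [hi, hj, dif_pos] at h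
      have := emb.injective (Subtype.coe_injective h)
      exact congrArg Subtype.val this
    set q : Fin k → Fin 2 ⊕ Fin k := fun i =>
      if i ∈ Bad then Sum.inl (φ i) else Sum.inr i with hq
    have hqr : ∀ i, (f (q i)).isRight := by
      intro i
      rw [hq]
      by_cases h : i ∈ Bad
      · simp only [h, if_pos]
        have := hφGL i h
        rw [hGL, Finset.mem_filter] at this
        exact this.2
      · simp only [h, if_neg, if_false]
        have : i ∉ Finset.univ.filter (fun i => (f (Sum.inr i)).isLeft) := h
        rw [Finset.mem_filter] at this
        push_neg at this
        have h3 := this (Finset.mem_univ _)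
        rwa [← Sum.not_isLeft]
    have hqinj : Function.Injective q := by
      intro i j h
      rw [hq] at h
      by_cases hi : i ∈ Bad <;> by_cases hj : j ∈ Bad <;>
        simp only [hi, hj, if_pos, if_neg, if_false, if_true] at h
      · exact hφinj i j hi hj (Sum.inl_injective h)
      · exact absurd h (Sum.inl_ne_inr)
      · exact absurd h.symm (Sum.inl_ne_inr)
      · exact Sum.inr_injective h
    have hqadj : ∀ i j, (pathGraph k).Adj i j →
        ((⊤ : SimpleGraph (Fin 2)).graphJoin (pathGraph k)).Adj (q i) (q j) := by
      intro i j hadj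
      have hij : i ≠ j := hadj.ne
      rw [hq]
      by_cases hi : i ∈ Bad <;> by_cases hj : j ∈ Bad <;>
        simp only [hi, hj, if_pos, if_neg, if_false, if_true]
      · rw [graphJoin_adj_ll, top_adj]
        exact fun h => hij (hφinj i j hi hj h)
      · exact graphJoin_adj_lr _ _ _ _
      · exact graphJoin_adj_rl _ _ _ _
      · rwa [graphJoin_adj_rr]
    set g : Fin k → Fin n' := fun i => Sum.elim (fun _ => (⟨0, hn0⟩ : Fin n')) id (f (q i)) with hg
    have hfg : ∀ i, f (q i) = Sum.inr (g i) := by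
      intro i
      obtain ⟨y, hy⟩ := Sum.isRight_iff.mp (hqr i)
      rw [hy, hg]
      simp [hy]
    apply hG'.1
    refine ⟨⟨g, ?_⟩, ?_⟩
    · intro i j hadj
      have h1 := f.map_adj (hqadj i j hadj)
      rw [hfg i, hfg j, graphJoin_adj_rr] at h1
      exact h1
    · intro i j h
      have h' : g i = g j := h
      apply hqinj
      apply hf
      rw [hfg i, hfg j, h']
  · rintro (a | a) (b | b) huv hadj
    · exact absurd (by rw [graphJoin_adj_ll, top_adj]; exact fun h => huv (by rw [h])) hadj
    · exact absurd (graphJoin_adj_lr _ _ _ _) hadj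
    · exact absurd (graphJoin_adj_rl _ _ _ _) hadj
    · have hab : a ≠ b := fun h => huv (by rw [h])
      have hnadj : ¬ G'.Adj a b := fun h => hadj ((graphJoin_adj_rr _ _ _ _).mpr h)
      obtain ⟨g, hg⟩ := hG'.2 a b hab hnadj
      set F : (Fin 2 ⊕ Fin k) → (Fin 2 ⊕ Fin n') :=
        Sum.elim Sum.inl (fun i => Sum.inr (g i)) with hF
      refine ⟨⟨F, ?_⟩, ?_⟩
      · rintro (x | x) (y | y) h
        · exact Or.inl h
        · exact Or.inl (graphJoin_adj_lr _ _ _ _)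
        · exact Or.inl (graphJoin_adj_rl _ _ _ _)
        · have h2 := g.map_adj h
          rcases h2 with h2 | h2
          · exact Or.inl ((graphJoin_adj_rr _ _ _ _).mpr h2)
          · rw [fromEdgeSet_adj, Set.mem_singleton_iff] at h2
            refine Or.inr ?_
            rw [fromEdgeSet_adj, Set.mem_singleton_iff]
            constructor
            · have : Sym2.map (Sum.inr : Fin n' → Fin 2 ⊕ Fin n') s(g x, g y)
                  = Sym2.map (Sum.inr : Fin n' → Fin 2 ⊕ Fin n') s(a, b) := by
                rw [h2.1]
              simpa [Sym2.map_pair_eq, hF] using this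
            · exact fun hc => h2.2 (Sum.inr_injective hc)
      · intro a b h
        have h' : F a = F b := h
        rcases a with x | x <;> rcases b with y | y <;>
          simp only [hF, Sum.elim_inl, Sum.elim_inr] at h'
        · rw [Sum.inl_injective h']
        · exact absurd h' Sum.inl_ne_inr
        · exact absurd h'.symm Sum.inl_ne_inr
        · rw [hg (Sum.inr_injective h')]

theorem sat_K2_join_path_le (k n : ℕ) (hk : 2 ≤ k) (hn : k + 2 ≤ n) :
    satNumber n ((⊤ : SimpleGraph (Fin 2)).graphJoin (SimpleGraph.pathGraph k)) ≤
      2 * n - 3 + satNumber (n - 2) (SimpleGraph.pathGraph k) := by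
  have hfree : ¬ (pathGraph k).Contains (⊥ : SimpleGraph (Fin (n - 2))) := by
    rintro ⟨g, -⟩
    have hadj : (pathGraph k).Adj ⟨0, by omega⟩ ⟨1, by omega⟩ :=
      pathGraph_adj.mpr (Or.inl rfl)
    exact g.map_adj hadj
  have hne : {m : ℕ | ∃ G : SimpleGraph (Fin (n - 2)),
      (pathGraph k).IsSatur G ∧ G.edgeSet.ncard = m}.Nonempty := by
    obtain ⟨G, hG⟩ := exists_isSatur (pathGraph k) (n - 2) hfree
    exact ⟨G.edgeSet.ncard, G, hG, rfl⟩
  obtain ⟨G', hsat', hncard⟩ := Nat.sInf_mem hne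
  set J := (⊤ : SimpleGraph (Fin 2)).graphJoin G' with hJ
  have hsatJ : ((⊤ : SimpleGraph (Fin 2)).graphJoin (pathGraph k)).IsSatur J :=
    join_isSatur hk (by omega) G' hsat'
  set e : (Fin 2 ⊕ Fin (n - 2)) ≃ Fin n :=
    finSumFinEquiv.trans (finCongr (by omega)) with he
  set Gfin := J.map e.toEmbedding with hGfin
  have iso : J ≃g Gfin := SimpleGraph.Iso.map e J
  have hsatfin : ((⊤ : SimpleGraph (Fin 2)).graphJoin (pathGraph k)).IsSatur Gfin :=
    isSatur_of_iso iso hsatJ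
  have hcount : Gfin.edgeSet.ncard = J.edgeSet.ncard := by
    rw [← Nat.card_coe_set_eq, ← Nat.card_coe_set_eq]
    exact Nat.card_congr iso.mapEdgeSet.symm
  have hle : satNumber n ((⊤ : SimpleGraph (Fin 2)).graphJoin (pathGraph k))
      ≤ Gfin.edgeSet.ncard :=
    Nat.sInf_le ⟨Gfin, hsatfin, rfl⟩
  have hJcount : J.edgeSet.ncard
      = 1 + G'.edgeSet.ncard + 2 * (n - 2) := graphJoin_edgeSet_ncard G'
  rw [hcount, hJcount, hncard] at hle
  have h4 : 4 ≤ n := by omega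
  calc satNumber n ((⊤ : SimpleGraph (Fin 2)).graphJoin (pathGraph k))
      ≤ 1 + satNumber (n - 2) (pathGraph k) + 2 * (n - 2) := hle
    _ = 2 * n - 3 + satNumber (n - 2) (pathGraph k) := by omega
end
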